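/- For n ≥ 16 there exist N > 2^{n/8} points ξ_0, …, ξ_{N−1} in the hypercube {−1, +1}ⁿ such that ‖ξ_i − ξ_j‖² ≥ n/2 for all i ≠ j. -/

import Mathlib

/-!
A maximal binary code `S` of minimum distance `> r` is also a covering code of radius `r`, so the
Hamming balls of radius `r` around `S` cover the cube and `2 ^ n ≤ #S · V(r)`. The ball volume is
bounded by a Chernoff-type estimate: `x ^ r · V(r) ≤ ∑ y, x ^ d(y, s) = (1 + x) ^ n` for
`0 ≤ x ≤ 1`. With `r = ⌊n/8⌋`, `x = 1/2` this gives `#S > 2 ^ (n/8)`, and the map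
`b ↦ (±1)_i` turns Hamming distance `d` into squared Euclidean distance `4d > n/2`.
-/

open Finset

section HammingCode

variable {ι : Type*} [Fintype ι]

theorem exists_pairwise_lt_hammingDist_forall_exists_hammingDist_le {β : ι → Type*}
    [∀ i, Fintype (β i)] [∀ i, DecidableEq (β i)] (r : ℕ) :
    ∃ S : Finset (∀ i, β i), (S : Set (∀ i, β i)).Pairwise (fun a b => r < hammingDist a b) ∧
      ∀ y, ∃ s ∈ S, hammingDist y s ≤ r := by
  classical
  obtain ⟨S, hS, hmax⟩ := exists_max_image
    {S : Finset (∀ i, β i) | (S : Set (∀ i, β i)).Pairwise (fun a b => r < hammingDist a b)}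
    card ⟨∅, by simp⟩
  rw [mem_filter] at hS
  refine ⟨S, hS.2, fun y => ?_⟩
  by_contra! hfar
  have hyS : y ∉ S := fun hy => by simpa using hfar y hy
  have hins : ((insert y S : Finset (∀ i, β i)) : Set (∀ i, β i)).Pairwise
      (fun a b => r < hammingDist a b) := by
    rw [coe_insert, Set.pairwise_insert]
    exact ⟨hS.2, fun s hs _ => ⟨hfar s hs, hammingDist_comm y s ▸ hfar s hs⟩⟩
  have := hmax (insert y S) (mem_filter.2 ⟨mem_univ _, hins⟩)
  rw [card_insert_of_notMem hyS] at this
  omega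

variable [DecidableEq ι]

theorem sum_pow_hammingDist {R : Type*} [CommSemiring R] (s : ι → Bool) (x : R) :
    ∑ y, x ^ hammingDist y s = (1 + x) ^ Fintype.card ι := by
  have hfactor : ∀ y : ι → Bool, x ^ hammingDist y s = ∏ i, x ^ (if y i ≠ s i then 1 else 0) := by
    intro y
    rw [prod_pow_eq_pow_sum, sum_boole, Nat.cast_id, hammingDist]
  rw [Fintype.sum_congr _ _ hfactor,
    ← Fintype.prod_sum fun i (b : Bool) => x ^ (if b ≠ s i then 1 else 0), ← card_univ,
    ← prod_const]
  refine prod_congr rfl fun i _ => ?_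
  cases s i <;> simp [add_comm]

theorem pow_mul_card_filter_hammingDist_le {x : ℝ} (hx₀ : 0 ≤ x) (hx₁ : x ≤ 1) (s : ι → Bool)
    (r : ℕ) : x ^ r * #{y | hammingDist y s ≤ r} ≤ (1 + x) ^ Fintype.card ι :=
  calc x ^ r * #{y | hammingDist y s ≤ r}
      = ∑ y ∈ {y | hammingDist y s ≤ r}, x ^ r := by rw [sum_const, nsmul_eq_mul, mul_comm]
    _ ≤ ∑ y ∈ {y | hammingDist y s ≤ r}, x ^ hammingDist y s :=
        sum_le_sum fun y hy => pow_le_pow_of_le_one hx₀ hx₁ (mem_filter.1 hy).2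
    _ ≤ ∑ y, x ^ hammingDist y s :=
        sum_le_sum_of_subset_of_nonneg (subset_univ _) fun _ _ _ => by positivity
    _ = (1 + x) ^ Fintype.card ι := sum_pow_hammingDist s x

theorem pow_mul_two_pow_le_card_mul_one_add_pow {S : Finset (ι → Bool)}
    {r : ℕ} (hS : ∀ y, ∃ s ∈ S, hammingDist y s ≤ r) {x : ℝ} (hx₀ : 0 ≤ x) (hx₁ : x ≤ 1) :
    x ^ r * 2 ^ Fintype.card ι ≤ #S * (1 + x) ^ Fintype.card ι := by
  have hcover : (univ : Finset (ι → Bool)) ⊆ S.biUnion fun s => {y | hammingDist y s ≤ r} :=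
    fun y _ => by simpa using hS y
  calc x ^ r * 2 ^ Fintype.card ι = x ^ r * #(univ : Finset (ι → Bool)) := by simp
    _ ≤ x ^ r * ∑ s ∈ S, #{y | hammingDist y s ≤ r} := by
        gcongr
        exact_mod_cast (card_le_card hcover).trans card_biUnion_le
    _ ≤ ∑ _s ∈ S, (1 + x) ^ Fintype.card ι := by
        push_cast
        rw [mul_sum]
        exact sum_le_sum fun s _ => pow_mul_card_filter_hammingDist_le hx₀ hx₁ s r
    _ = #S * (1 + x) ^ Fintype.card ι := by rw [sum_const, nsmul_eq_mul]

end HammingCode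

theorem two_rpow_div_eight_mul_three_halves_pow_lt {n : ℕ} (hn : 0 < n) :
    (2 : ℝ) ^ ((n : ℝ) / 8) * (3 / 2) ^ n < (1 / 2) ^ (n / 8) * 2 ^ n := by
  set a : ℝ := 2 ^ ((n : ℝ) / 8)
  have ha : 0 < a := by positivity
  have ha8 : a ^ 8 = 2 ^ n := by
    rw [← Real.rpow_mul_natCast zero_le_two, Nat.cast_ofNat, div_mul_cancel₀ _ (by norm_num),
      Real.rpow_natCast]
  have hfloor : (2 : ℝ) ^ (n / 8) ≤ a := by
    refine (pow_le_pow_iff_left₀ (by positivity) ha.le (by norm_num : 8 ≠ 0)).1 ?_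
    rw [ha8, ← pow_mul]
    exact pow_le_pow_right₀ one_le_two (Nat.div_mul_le_self n 8)
  have hsq : a * a * (3 / 2) ^ n < 2 ^ n := by
    refine (pow_lt_pow_iff_left₀ (by positivity) (by positivity) (by norm_num : 4 ≠ 0)).1 ?_
    calc (a * a * (3 / 2) ^ n) ^ 4 = a ^ 8 * ((3 / 2) ^ 4) ^ n := by
          rw [← pow_mul, mul_comm 4 n, pow_mul]; ring
      _ = (81 / 8 : ℝ) ^ n := by rw [ha8, ← mul_pow]; norm_num
      _ < 16 ^ n := pow_lt_pow_left₀ (by norm_num) (by norm_num) hn.ne'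
      _ = (2 ^ n) ^ 4 := by rw [← pow_mul, mul_comm, pow_mul]; norm_num
  calc a * (3 / 2) ^ n = a * a * (3 / 2) ^ n / a := by field_simp
    _ < 2 ^ n / a := by gcongr
    _ ≤ 2 ^ n / 2 ^ (n / 8) := by gcongr
    _ = (1 / 2) ^ (n / 8) * 2 ^ n := by rw [one_div_pow, div_eq_inv_mul, one_div]

noncomputable def signVector {ι : Type*} (b : ι → Bool) : EuclideanSpace ℝ ι :=
  WithLp.toLp 2 fun i => if b i then 1 else -1

theorem signVector_apply_eq_one_or_eq_neg_one {ι : Type*} (b : ι → Bool) (i : ι) :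
    signVector b i = 1 ∨ signVector b i = -1 := by
  cases h : b i <;> simp [signVector, h]

theorem norm_signVector_sub_sq {ι : Type*} [Fintype ι] (a b : ι → Bool) :
    ‖signVector a - signVector b‖ ^ 2 = 4 * hammingDist a b := by
  have hcoord : ∀ i, ‖(signVector a - signVector b) i‖ ^ 2 = 4 * if a i ≠ b i then 1 else 0 := by
    intro i
    simp only [PiLp.sub_apply, signVector, Real.norm_eq_abs, sq_abs]
    cases a i <;> cases b i <;> norm_num
  rw [EuclideanSpace.norm_sq_eq]
  simp_rw [hcoord]
  rw [← mul_sum, sum_boole, hammingDist]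

theorem varshamov_gilbert_packing
    (n : ℕ) (hn : 16 ≤ n) :
    ∃ (N : ℕ) (ξ : Fin N → EuclideanSpace ℝ (Fin n)),
      (2 : ℝ) ^ ((n : ℝ) / 8) < N ∧
      (∀ i k, ξ i k = 1 ∨ ξ i k = -1) ∧
      ∀ i j, i ≠ j → (n : ℝ) / 2 ≤ ‖ξ i - ξ j‖ ^ 2 := by
  obtain ⟨S, hsep, hcover⟩ :=
    exists_pairwise_lt_hammingDist_forall_exists_hammingDist_le (β := fun _ : Fin n => Bool) (n / 8)
  have hcount := pow_mul_two_pow_le_card_mul_one_add_pow hcover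
    (x := 1 / 2) (by norm_num) (by norm_num)
  rw [Fintype.card_fin, show (1 + 1 / 2 : ℝ) = 3 / 2 by norm_num] at hcount
  have hN : (2 : ℝ) ^ ((n : ℝ) / 8) < #S := lt_of_mul_lt_mul_right
    ((two_rpow_div_eight_mul_three_halves_pow_lt (by omega)).trans_le hcount) (by positivity)
  let e := S.equivFin.symm
  refine ⟨#S, fun i => signVector (e i : Fin n → Bool), hN,
    fun i => signVector_apply_eq_one_or_eq_neg_one _, fun i j hij => ?_⟩
  have hdist := hsep (e i).2 (e j).2 fun h => hij (e.injective (Subtype.ext h))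
  have hn8 : (n : ℝ) < 8 * hammingDist (e i : Fin n → Bool) (e j) := by exact_mod_cast (by omega)
  rw [norm_signVector_sub_sq]
  linarith
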